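/- arXiv:1801.01975 — 2 statements merged into one kernel-verified Lean document; each statement's English description precedes it below -/
import Mathlib

section
/- Let G be a finite simple graph, π = {W_1,…,W_d} a vertex clique-partition of G, e_π = {U_1,…,U_s} a clique cluster-partition based on π with exactly r clusters that are unions of at least two cliques, and let G^{cc} be the clique cluster-whiskered graph built from this data. Then the set W = {a_1,…,a_d, b_1,…,b_r} of added vertices is a maximal independent vertex set of G^{cc} of cardinality d + r; consequently the independence complex Ind G^{cc} has dimension d + r − 1. -/
/-!
The added vertices lie outside `V(G)` and are adjacent only to vertices of `V(G)`, so they are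
independent; every vertex of `G` lies in some clique `W_i` and hence sees the whisker `a_i`, which
gives maximality. For the bound, the `d + r` cliques `W_i ∪ {a_i}` and `{b_j}` cover `G^{cc}`, and
an independent set meets each clique of a cover in at most one vertex.
-/

namespace Paper

variable {V : Type*}

/-- `S` is an independent vertex set of the graph `H` (equivalently, of any induced
subgraph of `H` containing `S`): its vertices are pairwise non-adjacent. -/
def IndepOn (H : SimpleGraph V) (S : Set V) : Prop :=
  ∀ x ∈ S, ∀ y ∈ S, ¬ H.Adj x y

/-- `S` is a maximal independent vertex set of the graph `H`. -/
def MaxIndep (H : SimpleGraph V) (S : Set V) : Prop :=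
  IndepOn H S ∧ ∀ T : Set V, IndepOn H T → S ⊆ T → T = S

/-- The data exhibiting the graph `H` (on its full vertex type) as a clique
cluster-whiskered graph `G^{cc}` over the base graph `G` (the induced subgraph of `H`
on `Vg`), built from a vertex clique-partition `π = {W_1, …, W_d}` and a clique
cluster-partition `e_π = {U_1, …, U_s}` based on `π`, by adding `d + r` new vertices
`a_1, …, a_d, b_1, …, b_r`, where `a i` is adjacent exactly to the vertices of `W i`
and `b j` is adjacent exactly to the vertices of `U j`. -/
structure CcWhiskered (H : SimpleGraph V) (d s r : ℕ) where
  hrs : r ≤ s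
  /-- the vertex set of the base graph `G`; the edges of `G` are the edges of `H`
  between vertices of `Vg`, i.e. `G` is the induced subgraph of `H` on `Vg`. -/
  Vg : Set V
  /-- the vertex clique-partition `π = {W_1, …, W_d}` of `G` -/
  W : Fin d → Set V
  /-- the clique cluster-partition `e_π = {U_1, …, U_s}` based on `π` -/
  U : Fin s → Set V
  W_ne : ∀ i, (W i).Nonempty
  W_sub : ∀ i, W i ⊆ Vg
  W_disj : ∀ i j, i ≠ j → Disjoint (W i) (W j)
  W_cover : Vg ⊆ ⋃ i, W i
  W_clique : ∀ i, ∀ x ∈ W i, ∀ y ∈ W i, x ≠ y → H.Adj x y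
  U_ne : ∀ j, (U j).Nonempty
  U_sub : ∀ j, U j ⊆ Vg
  U_disj : ∀ j k, j ≠ k → Disjoint (U j) (U k)
  U_cover : Vg ⊆ ⋃ j, U j
  /-- each clique of `π` is contained in some cluster -/
  W_in_U : ∀ i, ∃ j, W i ⊆ U j
  /-- two distinct cliques of `π` lying in a common cluster have no edge between them -/
  cluster_indep : ∀ i i', i ≠ i' → ∀ j, W i ⊆ U j → W i' ⊆ U j →
    ∀ x ∈ W i, ∀ y ∈ W i', ¬ H.Adj x y
  /-- the first `r` clusters are unions of at least two cliques of `π` -/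
  U_multi : ∀ j : Fin r, ∃ i i' : Fin d, i ≠ i' ∧
    W i ⊆ U (Fin.castLE hrs j) ∧ W i' ⊆ U (Fin.castLE hrs j)
  /-- the remaining `s - r` clusters each coincide with a single clique of `π` -/
  U_single : ∀ j : Fin s, r ≤ (j : ℕ) → ∃ i, U j = W i
  /-- the added whisker vertices `a_1, …, a_d` -/
  a : Fin d → V
  /-- the added whisker vertices `b_1, …, b_r` -/
  b : Fin r → V
  a_notin : ∀ i, a i ∉ Vg
  b_notin : ∀ j, b j ∉ Vg
  a_inj : Function.Injective a
  b_inj : Function.Injective b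
  ab_ne : ∀ i j, a i ≠ b j
  /-- the vertex set of `G^{cc}` is `V(G)` together with the new vertices -/
  total : Set.univ = Vg ∪ Set.range a ∪ Set.range b
  /-- `a i` is adjacent exactly to the vertices of `W i` -/
  a_adj : ∀ i, ∀ w : V, H.Adj (a i) w ↔ w ∈ W i
  /-- `b j` is adjacent exactly to the vertices of `U j` -/
  b_adj : ∀ j, ∀ w : V, H.Adj (b j) w ↔ w ∈ U (Fin.castLE hrs j)

variable {H : SimpleGraph V}

theorem IndepOn.ncard_le_of_forall_mem_clique {ι : Type*} [Finite ι] {C : ι → Set V}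
    (hC : ∀ k, H.IsClique (C k)) (hcover : ∀ v, ∃ k, v ∈ C k) {S : Set V}
    (hS : IndepOn H S) : S.ncard ≤ Nat.card ι := by
  choose f hf using hcover
  have hinj : Set.InjOn f S := by
    intro x hx y hy hxy
    by_contra hne
    exact hS x hx y hy (hC (f x) (hf x) (hxy ▸ hf y) hne)
  simpa using Set.ncard_le_ncard_of_injOn f (fun _ _ => Set.mem_univ _) hinj

theorem maxIndep_of_forall_exists_adj {S : Set V} (hS : IndepOn H S)
    (hdom : ∀ v ∉ S, ∃ u ∈ S, H.Adj u v) : MaxIndep H S := by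
  refine ⟨hS, fun T hT hST => Set.Subset.antisymm ?_ hST⟩
  intro v hvT
  by_contra hvS
  obtain ⟨u, huS, huv⟩ := hdom v hvS
  exact hT u (hST huS) v hvT huv

namespace CcWhiskered

variable {d s r : ℕ} (M : CcWhiskered H d s r)

theorem notMem_Vg_of_mem_added {v : V} (hv : v ∈ Set.range M.a ∪ Set.range M.b) :
    v ∉ M.Vg := by
  rcases hv with ⟨i, rfl⟩ | ⟨j, rfl⟩
  exacts [M.a_notin i, M.b_notin j]

theorem mem_Vg_of_adj_added {v w : V} (hv : v ∈ Set.range M.a ∪ Set.range M.b)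
    (hvw : H.Adj v w) : w ∈ M.Vg := by
  rcases hv with ⟨i, rfl⟩ | ⟨j, rfl⟩
  · exact M.W_sub i ((M.a_adj i w).mp hvw)
  · exact M.U_sub _ ((M.b_adj j w).mp hvw)

theorem indepOn_added : IndepOn H (Set.range M.a ∪ Set.range M.b) :=
  fun _ hx _ hy hxy => M.notMem_Vg_of_mem_added hy (M.mem_Vg_of_adj_added hx hxy)

theorem exists_mem_W_of_notMem_added {v : V} (hv : v ∉ Set.range M.a ∪ Set.range M.b) :
    ∃ i, v ∈ M.W i := by
  have hv' : v ∈ M.Vg ∪ Set.range M.a ∪ Set.range M.b := M.total ▸ Set.mem_univ v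
  rw [Set.union_assoc] at hv'
  exact Set.mem_iUnion.mp (M.W_cover (hv'.resolve_right hv))

theorem maxIndep_added : MaxIndep H (Set.range M.a ∪ Set.range M.b) := by
  refine maxIndep_of_forall_exists_adj M.indepOn_added fun v hv => ?_
  obtain ⟨i, hvi⟩ := M.exists_mem_W_of_notMem_added hv
  exact ⟨M.a i, Or.inl ⟨i, rfl⟩, (M.a_adj i v).mpr hvi⟩

theorem ncard_added : (Set.range M.a ∪ Set.range M.b).ncard = d + r := by
  have hdisj : Disjoint (Set.range M.a) (Set.range M.b) := by
    rw [Set.disjoint_left]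
    rintro _ ⟨i, rfl⟩ ⟨j, hj⟩
    exact M.ab_ne i j hj.symm
  rw [Set.ncard_union_eq hdisj, Set.ncard_range_of_injective M.a_inj,
    Set.ncard_range_of_injective M.b_inj, Nat.card_fin, Nat.card_fin]

def cliqueCover : Fin d ⊕ Fin r → Set V :=
  Sum.elim (fun i => insert (M.a i) (M.W i)) (fun j => {M.b j})

theorem isClique_cliqueCover (k : Fin d ⊕ Fin r) : H.IsClique (M.cliqueCover k) := by
  rcases k with i | j
  · exact SimpleGraph.isClique_insert.mpr ⟨M.W_clique i, fun w hw _ => (M.a_adj i w).mpr hw⟩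
  · exact SimpleGraph.isClique_singleton _

theorem exists_mem_cliqueCover (v : V) : ∃ k, v ∈ M.cliqueCover k := by
  by_cases hv : v ∈ Set.range M.a ∪ Set.range M.b
  · rcases hv with ⟨i, rfl⟩ | ⟨j, rfl⟩
    · exact ⟨Sum.inl i, Set.mem_insert _ _⟩
    · exact ⟨Sum.inr j, Set.mem_singleton _⟩
  · obtain ⟨i, hvi⟩ := M.exists_mem_W_of_notMem_added hv
    exact ⟨Sum.inl i, Set.mem_insert_of_mem _ hvi⟩

end CcWhiskered

theorem ccWhiskered_added_vertices_maxIndep_general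
    (H : SimpleGraph V) (d s r : ℕ) (M : CcWhiskered H d s r) :
    MaxIndep H (Set.range M.a ∪ Set.range M.b) ∧
    (Set.range M.a ∪ Set.range M.b).ncard = d + r ∧
    ∀ S : Set V, IndepOn H S → S.ncard ≤ d + r := by
  refine ⟨M.maxIndep_added, M.ncard_added, fun S hS => ?_⟩
  simpa using hS.ncard_le_of_forall_mem_clique M.isClique_cliqueCover M.exists_mem_cliqueCover

/-- **Theorem.** The set `W = {a_1, …, a_d, b_1, …, b_r}` of added vertices is a
maximal independent vertex set of `G^{cc}` of cardinality `d + r`; consequently the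
independence complex `Ind G^{cc}` has dimension `d + r - 1`, i.e. every independent
vertex set of `G^{cc}` has cardinality at most `d + r`. -/
theorem ccWhiskered_added_vertices_maxIndep [Fintype V]
    (H : SimpleGraph V) (d s r : ℕ) (M : CcWhiskered H d s r) :
    MaxIndep H (Set.range M.a ∪ Set.range M.b) ∧
    (Set.range M.a ∪ Set.range M.b).ncard = d + r ∧
    ∀ S : Set V, IndepOn H S → S.ncard ≤ d + r :=
  ccWhiskered_added_vertices_maxIndep_general H d s r M

end Paper
end

section
/- Let G be a finite simple graph with vertex clique-partition π = {W_1,…,W_d}, let G^π be the clique-whiskered graph with added vertex set W, and order the maximal independent vertex sets of G^π by F_1 ≤ F_2 ⇔ F_1 \ W ⊆ F_2 \ W. Let F be a maximal element of this poset and set r = |F \ W|. Then the interval [W, F] = {maximal independent sets H of G^π with H \ W ⊆ F \ W} has exactly 2^r elements; indeed the map H ↦ H \ W is a bijection from [W, F] onto the power set of F \ W. -/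
namespace Paper

variable {V : Type*}

/-- The data exhibiting the graph `H` (on its full vertex type) as the
clique-whiskered graph `G^π` over the base graph `G` (the induced subgraph of `H` on
`Vg`), built from a vertex clique-partition `π = {W_1, …, W_d}` of `G` by adding `d`
new vertices `s_1', …, s_d'`, where `s_i'` is adjacent exactly to the vertices of
`W i`.  The set of added vertices is `W = Set.range sV`. -/
structure CliqueWhiskered (H : SimpleGraph V) (d : ℕ) where
  /-- the vertex set of the base graph `G`; the edges of `G` are the edges of `H`
  between vertices of `Vg`, i.e. `G` is the induced subgraph of `H` on `Vg`. -/
  Vg : Set V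
  /-- the vertex clique-partition `π = {W_1, …, W_d}` of `G` -/
  W : Fin d → Set V
  /-- the added whisker vertices `s_1', …, s_d'` -/
  sV : Fin d → V
  W_ne : ∀ i, (W i).Nonempty
  W_sub : ∀ i, W i ⊆ Vg
  W_disj : ∀ i j, i ≠ j → Disjoint (W i) (W j)
  W_cover : Vg ⊆ ⋃ i, W i
  W_clique : ∀ i, ∀ x ∈ W i, ∀ y ∈ W i, x ≠ y → H.Adj x y
  s_notin : ∀ i, sV i ∉ Vg
  s_inj : Function.Injective sV
  /-- the vertex set of `G^π` is `V(G)` together with the new vertices -/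
  total : Set.univ = Vg ∪ Set.range sV
  /-- `s_i'` is adjacent exactly to the vertices of `W i` -/
  s_adj : ∀ i, ∀ w : V, H.Adj (sV i) w ↔ w ∈ W i

/-! A maximal independent set `S` of `G^π` is determined by its trace `T = S \ W`: the whisker
`s_i'` lies in `S` exactly when `T` misses `W_i`. Conversely, every independent `T ⊆ V(G)`
extends to the maximal independent set `T ∪ {s_i' | T ∩ W_i = ∅}`: a clique `W_i` that meets `T`
has all its other vertices and `s_i'` adjacent to that point of `T`, while one that misses `T` is
dominated by `s_i'`. So `S ↦ S \ W` maps `[W, F]` bijectively onto the power set of `F \ W`. -/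

theorem IndepOn.mono {H : SimpleGraph V} {S T : Set V} (hT : IndepOn H T) (hST : S ⊆ T) :
    IndepOn H S :=
  fun x hx y hy => hT x (hST hx) y (hST hy)

theorem maxIndep_iff {H : SimpleGraph V} {S : Set V} :
    MaxIndep H S ↔ IndepOn H S ∧ ∀ v ∉ S, ∃ u ∈ S, H.Adj v u := by
  refine ⟨fun hS => ⟨hS.1, fun v hv => ?_⟩, fun ⟨hS, hdom⟩ => ⟨hS, fun T hT hST => ?_⟩⟩
  · by_contra! hnadj
    have hins : IndepOn H (insert v S) := by
      rintro x (rfl | hx) y (rfl | hy)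
      · exact H.irrefl
      · exact hnadj y hy
      · exact fun h => hnadj x hx h.symm
      · exact hS.1 x hx y hy
    exact hv (hS.2 _ hins (Set.subset_insert v S) ▸ Set.mem_insert v S)
  · refine Set.Subset.antisymm (fun v hvT => ?_) hST
    by_contra hvS
    obtain ⟨u, huS, hvu⟩ := hdom v hvS
    exact hT v hvT u (hST huS) hvu

namespace CliqueWhiskered

variable {H : SimpleGraph V} {d : ℕ} (M : CliqueWhiskered H d)

def extend (T : Set V) : Set V :=
  T ∪ M.sV '' {i | Disjoint T (M.W i)}

theorem disjoint_Vg_range : Disjoint M.Vg (Set.range M.sV) :=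
  Set.disjoint_right.2 fun _ ⟨i, hi⟩ => hi ▸ M.s_notin i

theorem mem_Vg_or_mem_range (v : V) : v ∈ M.Vg ∪ Set.range M.sV :=
  M.total ▸ Set.mem_univ v

theorem diff_range_subset_Vg (S : Set V) : S \ Set.range M.sV ⊆ M.Vg := fun x hx =>
  (M.mem_Vg_or_mem_range x).resolve_right hx.2

theorem not_adj_sV_sV (i j : Fin d) : ¬ H.Adj (M.sV i) (M.sV j) := fun h =>
  M.s_notin j (M.W_sub i ((M.s_adj i _).1 h))

theorem disjoint_diff_range_W_iff (S : Set V) (i : Fin d) :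
    Disjoint (S \ Set.range M.sV) (M.W i) ↔ Disjoint S (M.W i) := by
  rw [disjoint_sdiff_comm, (M.disjoint_Vg_range.mono_left (M.W_sub i)).sdiff_eq_left]

theorem sV_mem_iff_disjoint {S : Set V} (hS : MaxIndep H S) (i : Fin d) :
    M.sV i ∈ S ↔ Disjoint S (M.W i) := by
  refine ⟨fun hi => Set.disjoint_left.2 fun x hxS hxW => hS.1 _ hi x hxS ((M.s_adj i x).2 hxW),
    fun hdisj => ?_⟩
  by_contra hi
  obtain ⟨u, huS, hu⟩ := (maxIndep_iff.1 hS).2 _ hi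
  exact Set.disjoint_left.1 hdisj huS ((M.s_adj i u).1 hu)

theorem extend_diff_range {T : Set V} (hT : T ⊆ M.Vg) :
    M.extend T \ Set.range M.sV = T := by
  rw [extend, Set.union_sdiff_distrib, Set.sdiff_eq_empty.2 (Set.image_subset_range _ _),
    Set.union_empty, (M.disjoint_Vg_range.mono_left hT).sdiff_eq_left]

theorem extend_diff_range_eq {S : Set V} (hS : MaxIndep H S) :
    M.extend (S \ Set.range M.sV) = S := by
  ext v
  by_cases hv : v ∈ Set.range M.sV
  · obtain ⟨i, rfl⟩ := hv
    simp only [extend, Set.mem_union, Set.mem_sdiff, Set.mem_range_self, not_true_eq_false,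
      and_false, false_or, M.s_inj.mem_set_image, Set.mem_ofPred_eq,
      disjoint_diff_range_W_iff, M.sV_mem_iff_disjoint hS]
  · have hv' : v ∉ M.sV '' {i | Disjoint (S \ Set.range M.sV) (M.W i)} :=
      fun h => hv (Set.image_subset_range _ _ h)
    simp [extend, hv, hv']

theorem indepOn_extend {T : Set V} (hT : IndepOn H T) : IndepOn H (M.extend T) := by
  have hwhisker : ∀ i, Disjoint T (M.W i) → ∀ x ∈ T, ¬ H.Adj (M.sV i) x :=
    fun i hi x hx h => Set.disjoint_left.1 hi hx ((M.s_adj i x).1 h)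
  rintro x (hx | ⟨i, hi, rfl⟩) y (hy | ⟨j, hj, rfl⟩)
  · exact hT x hx y hy
  · exact fun h => hwhisker j hj x hx h.symm
  · exact hwhisker i hi y hy
  · exact M.not_adj_sV_sV i j

theorem exists_adj_of_not_mem_extend {T : Set V} {v : V}
    (hv : v ∉ M.extend T) : ∃ u ∈ M.extend T, H.Adj v u := by
  have hTW : ∀ i, ¬ Disjoint T (M.W i) → ∃ t ∈ T, t ∈ M.W i := fun i h => by
    simpa [Set.not_disjoint_iff] using h
  rcases M.mem_Vg_or_mem_range v with hvG | ⟨i, rfl⟩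
  · obtain ⟨i, hvi⟩ := Set.mem_iUnion.1 (M.W_cover hvG)
    by_cases hdisj : Disjoint T (M.W i)
    · exact ⟨M.sV i, Or.inr ⟨i, hdisj, rfl⟩, (M.s_adj i v).2 hvi |>.symm⟩
    · obtain ⟨t, htT, htW⟩ := hTW i hdisj
      have hvt : v ≠ t := fun h => hv (Or.inl (h ▸ htT))
      exact ⟨t, Or.inl htT, M.W_clique i v hvi t htW hvt⟩
  · have hdisj : ¬ Disjoint T (M.W i) := fun h => hv (Or.inr ⟨i, h, rfl⟩)
    obtain ⟨t, htT, htW⟩ := hTW i hdisj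
    exact ⟨t, Or.inl htT, (M.s_adj i t).2 htW⟩

theorem maxIndep_extend {T : Set V} (hT : IndepOn H T) :
    MaxIndep H (M.extend T) :=
  maxIndep_iff.2 ⟨M.indepOn_extend hT, fun _ hv => M.exists_adj_of_not_mem_extend hv⟩

theorem existsUnique_maxIndep_diff_range_eq {T : Set V} (hTG : T ⊆ M.Vg) (hT : IndepOn H T) :
    ∃! S : Set V, MaxIndep H S ∧ S \ Set.range M.sV = T :=
  ⟨M.extend T, ⟨M.maxIndep_extend hT, M.extend_diff_range hTG⟩,
    fun _ ⟨hS, hST⟩ => hST ▸ (M.extend_diff_range_eq hS).symm⟩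

theorem bijOn_diff_range {A : Set V} (hAG : A ⊆ M.Vg) (hA : IndepOn H A) :
    Set.BijOn (· \ Set.range M.sV) {S | MaxIndep H S ∧ S \ Set.range M.sV ⊆ A} (𝒫 A) := by
  refine ⟨fun S hS => hS.2, fun S₁ hS₁ S₂ hS₂ h => ?_, fun T hT => ?_⟩
  · rw [← M.extend_diff_range_eq hS₁.1, ← M.extend_diff_range_eq hS₂.1]
    exact congrArg M.extend h
  · have hTG : T ⊆ M.Vg := Set.Subset.trans hT hAG
    exact ⟨M.extend T, ⟨M.maxIndep_extend (hA.mono hT), (M.extend_diff_range hTG).symm ▸ hT⟩,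
      M.extend_diff_range hTG⟩

end CliqueWhiskered

theorem cliqueWhiskered_interval_card_general [Fintype V]
    (H : SimpleGraph V) (d : ℕ) (M : CliqueWhiskered H d)
    (F : Set V) (hF : MaxIndep H F)
    (r : ℕ) (hr : (F \ Set.range M.sV).ncard = r) :
    (∀ T ⊆ F \ Set.range M.sV,
      ∃! Fs : Set V, MaxIndep H Fs ∧ Fs \ Set.range M.sV = T) ∧
    {Fs : Set V | MaxIndep H Fs ∧
      Fs \ Set.range M.sV ⊆ F \ Set.range M.sV}.ncard = 2 ^ r := by
  have hAG := M.diff_range_subset_Vg F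
  have hA : IndepOn H (F \ Set.range M.sV) := hF.1.mono Set.sdiff_subset
  refine ⟨fun T hT => M.existsUnique_maxIndep_diff_range_eq (hT.trans hAG) (hA.mono hT), ?_⟩
  rw [(M.bijOn_diff_range hAG hA).ncard_eq, Set.ncard_powerset, hr]

/-- **Theorem.** Let `F` be a maximal element of the poset of maximal independent
vertex sets of `G^π` (ordered by `F₁ ≤ F₂ ⇔ F₁ \ W ⊆ F₂ \ W`) and let
`r = |F \ W|`.  Then `H ↦ H \ W` is a bijection from the interval
`[W, F] = {maximal independent sets H with H \ W ⊆ F \ W}` onto the power set of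
`F \ W`; in particular the interval `[W, F]` has exactly `2 ^ r` elements. -/
theorem cliqueWhiskered_interval_card [Fintype V]
    (H : SimpleGraph V) (d : ℕ) (M : CliqueWhiskered H d)
    (F : Set V) (hF : MaxIndep H F)
    (hFmax : ∀ F' : Set V, MaxIndep H F' →
      F \ Set.range M.sV ⊆ F' \ Set.range M.sV →
      F' \ Set.range M.sV = F \ Set.range M.sV)
    (r : ℕ) (hr : (F \ Set.range M.sV).ncard = r) :
    (∀ T ⊆ F \ Set.range M.sV,
      ∃! Fs : Set V, MaxIndep H Fs ∧ Fs \ Set.range M.sV = T) ∧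
    {Fs : Set V | MaxIndep H Fs ∧
      Fs \ Set.range M.sV ⊆ F \ Set.range M.sV}.ncard = 2 ^ r :=
  cliqueWhiskered_interval_card_general H d M F hF r hr

end Paper
end
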